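/- arXiv:math/0307066 — 6 statements merged into one kernel-verified Lean document; each statement's English description precedes it below -/
import Mathlib

section
/- Let A, B, C be nonzero real numbers and α, β, γ be nonzero real numbers, and define δ = A²α² + B²β² + C²γ² − 2ABαβ − 2ACαγ − 2BCβγ. Then δ < 0 if and only if Aα, Bβ, Cγ all have the same sign and the three triangle inequalities hold: √|Aα| < √|Bβ| + √|Cγ|, √|Bβ| < √|Aα| + √|Cγ|, √|Cγ| < √|Aα| + √|Bβ|. -/
/-! Write `δ(x, y, z) = x² + y² + z² - 2xy - 2xz - 2yz` with `x = Aα`, `y = Bβ`, `z = Cγ`.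
Since `δ = (z - x - y)² - 4xy`, `δ < 0` forces `xy > 0` and likewise `xz > 0`, so `x, y, z` share a
sign; as `δ` is even we may take them positive. Then Heron's formula
`δ(a², b², c²) = -(a + b + c)(-a + b + c)(a - b + c)(a + b - c)` with `a = √x`, `b = √y`, `c = √z`
shows that `δ < 0` exactly when `a, b, c` satisfy the strict triangle inequalities. -/

open Real

def heronDisc (x y z : ℝ) : ℝ := x^2 + y^2 + z^2 - 2*x*y - 2*x*z - 2*y*z

lemma heronDisc_neg_neg_neg (x y z : ℝ) : heronDisc (-x) (-y) (-z) = heronDisc x y z := by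
  unfold heronDisc; ring

lemma heronDisc_sq (a b c : ℝ) :
    heronDisc (a^2) (b^2) (c^2) = -((a + b + c) * ((-a + b + c) * (a - b + c) * (a + b - c))) := by
  unfold heronDisc; ring

lemma same_sign_of_heronDisc_neg {x y z : ℝ} (h : heronDisc x y z < 0) :
    (0 < x ∧ 0 < y ∧ 0 < z) ∨ (x < 0 ∧ y < 0 ∧ z < 0) := by
  unfold heronDisc at h
  have hxy : 0 < x * y := by nlinarith [sq_nonneg (z - x - y)]
  have hxz : 0 < x * z := by nlinarith [sq_nonneg (y - x - z)]
  by_cases hx : 0 < x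
  · exact Or.inl ⟨hx, (pos_iff_pos_of_mul_pos hxy).1 hx, (pos_iff_pos_of_mul_pos hxz).1 hx⟩
  · have hx : x < 0 := lt_of_le_of_ne (not_lt.1 hx) (left_ne_zero_of_mul hxy.ne')
    exact Or.inr ⟨hx, (neg_iff_neg_of_mul_pos hxy).1 hx, (neg_iff_neg_of_mul_pos hxz).1 hx⟩

lemma pos_and_pos_and_pos_of_mul_pos {p q r : ℝ} (hpq : 0 < p + q) (hpr : 0 < p + r)
    (hqr : 0 < q + r) (h : 0 < p * q * r) : 0 < p ∧ 0 < q ∧ 0 < r := by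
  refine ⟨?_, ?_, ?_⟩ <;> by_contra! hneg
  · nlinarith [mul_pos (by linarith : 0 < q) (by linarith : 0 < r)]
  · nlinarith [mul_pos (by linarith : 0 < p) (by linarith : 0 < r)]
  · nlinarith [mul_pos (by linarith : 0 < p) (by linarith : 0 < q)]

lemma heronDisc_sq_neg_iff {a b c : ℝ} (ha : 0 < a) (hb : 0 < b) (hc : 0 < c) :
    heronDisc (a^2) (b^2) (c^2) < 0 ↔ a < b + c ∧ b < a + c ∧ c < a + b := by
  rw [heronDisc_sq, neg_lt_zero, mul_pos_iff_of_pos_left (by positivity)]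
  constructor
  · intro h
    obtain ⟨h₁, h₂, h₃⟩ := pos_and_pos_and_pos_of_mul_pos (by linarith) (by linarith) (by linarith) h
    exact ⟨by linarith, by linarith, by linarith⟩
  · rintro ⟨h₁, h₂, h₃⟩
    exact mul_pos (mul_pos (by linarith) (by linarith)) (by linarith)

lemma heronDisc_neg_iff_of_pos {x y z : ℝ} (hx : 0 < x) (hy : 0 < y) (hz : 0 < z) :
    heronDisc x y z < 0 ↔ √x < √y + √z ∧ √y < √x + √z ∧ √z < √x + √y := by
  have h := heronDisc_sq_neg_iff (sqrt_pos.2 hx) (sqrt_pos.2 hy) (sqrt_pos.2 hz)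
  rwa [sq_sqrt hx.le, sq_sqrt hy.le, sq_sqrt hz.le] at h

lemma heronDisc_neg_iff_of_same_sign {x y z : ℝ}
    (hs : (0 < x ∧ 0 < y ∧ 0 < z) ∨ (x < 0 ∧ y < 0 ∧ z < 0)) :
    heronDisc x y z < 0 ↔
      √|x| < √|y| + √|z| ∧ √|y| < √|x| + √|z| ∧ √|z| < √|x| + √|y| := by
  rcases hs with ⟨hx, hy, hz⟩ | ⟨hx, hy, hz⟩
  · rw [abs_of_pos hx, abs_of_pos hy, abs_of_pos hz]
    exact heronDisc_neg_iff_of_pos hx hy hz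
  · rw [abs_of_neg hx, abs_of_neg hy, abs_of_neg hz, ← heronDisc_neg_neg_neg]
    exact heronDisc_neg_iff_of_pos (neg_pos.2 hx) (neg_pos.2 hy) (neg_pos.2 hz)

theorem stmt0_general (A B C α β γ : ℝ) :
    A^2*α^2 + B^2*β^2 + C^2*γ^2 - 2*A*B*α*β - 2*A*C*α*γ - 2*B*C*β*γ < 0 ↔
    (((0 < A*α ∧ 0 < B*β ∧ 0 < C*γ) ∨ (A*α < 0 ∧ B*β < 0 ∧ C*γ < 0)) ∧
      Real.sqrt |A*α| < Real.sqrt |B*β| + Real.sqrt |C*γ| ∧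
      Real.sqrt |B*β| < Real.sqrt |A*α| + Real.sqrt |C*γ| ∧
      Real.sqrt |C*γ| < Real.sqrt |A*α| + Real.sqrt |B*β|) := by
  have hδ : A^2*α^2 + B^2*β^2 + C^2*γ^2 - 2*A*B*α*β - 2*A*C*α*γ - 2*B*C*β*γ
      = heronDisc (A*α) (B*β) (C*γ) := by
    unfold heronDisc; ring
  rw [hδ]
  exact ⟨fun h => ⟨same_sign_of_heronDisc_neg h,
      (heronDisc_neg_iff_of_same_sign (same_sign_of_heronDisc_neg h)).1 h⟩,
    fun ⟨hs, ht⟩ => (heronDisc_neg_iff_of_same_sign hs).2 ht⟩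

theorem stmt0 (A B C α β γ : ℝ) (hA : A ≠ 0) (hB : B ≠ 0) (hC : C ≠ 0)
    (hα : α ≠ 0) (hβ : β ≠ 0) (hγ : γ ≠ 0) :
    A^2*α^2 + B^2*β^2 + C^2*γ^2 - 2*A*B*α*β - 2*A*C*α*γ - 2*B*C*β*γ < 0 ↔
    (((0 < A*α ∧ 0 < B*β ∧ 0 < C*γ) ∨ (A*α < 0 ∧ B*β < 0 ∧ C*γ < 0)) ∧
      Real.sqrt |A*α| < Real.sqrt |B*β| + Real.sqrt |C*γ| ∧
      Real.sqrt |B*β| < Real.sqrt |A*α| + Real.sqrt |C*γ| ∧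
      Real.sqrt |C*γ| < Real.sqrt |A*α| + Real.sqrt |B*β|) :=
  stmt0_general A B C α β γ
end

section
/- Let A, B, C, α, β, γ be nonzero real numbers and define δ = A²α² + B²β² + C²γ² − 2ABαβ − 2ACαγ − 2BCβγ. Then δ = 0 if and only if Aα, Bβ, Cγ all have the same sign and one of the following holds: √|Aα| = √|Bβ| + √|Cγ|, or √|Bβ| = √|Aα| + √|Cγ|, or √|Cγ| = √|Aα| + √|Bβ|. -/
/-!
With `a = Aα`, `b = Bβ`, `c = Cγ` the quantity is `a² + b² + c² − 2ab − 2ac − 2bc = (a − b − c)² − 4bc`,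
and likewise with the roles permuted, so it can vanish only if `ab`, `ac`, `bc` are all positive,
i.e. `a`, `b`, `c` have a common sign. It is unchanged by `(a, b, c) ↦ (|a|, |b|, |c|)` then, and for
`a = x²`, `b = y²`, `c = z²` with `x, y, z ≥ 0` it factors as Heron's product
`−(x + y + z)(y + z − x)(x + z − y)(x + y − z)`.
-/

open Real

def heronForm (a b c : ℝ) : ℝ := a^2 + b^2 + c^2 - 2*a*b - 2*a*c - 2*b*c

lemma heronForm_sq (x y z : ℝ) :
    heronForm (x^2) (y^2) (z^2) = -((x + y + z) * (y + z - x) * (x + z - y) * (x + y - z)) := by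
  unfold heronForm; ring

lemma heronForm_sq_eq_zero_iff {x y z : ℝ} (hx : 0 ≤ x) (hy : 0 ≤ y) (hz : 0 ≤ z) :
    heronForm (x^2) (y^2) (z^2) = 0 ↔ x = y + z ∨ y = x + z ∨ z = x + y := by
  rw [heronForm_sq, neg_eq_zero]
  simp only [mul_eq_zero, sub_eq_zero]
  constructor
  · rintro (((hsum | h) | h) | h)
    · left; linarith
    · exact Or.inl h.symm
    · exact Or.inr (Or.inl h.symm)
    · exact Or.inr (Or.inr h.symm)
  · rintro (h | h | h)
    · exact Or.inl (Or.inl (Or.inr h.symm))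
    · exact Or.inl (Or.inr h.symm)
    · exact Or.inr h.symm

lemma heronForm_eq_zero_iff_sqrt {a b c : ℝ} (ha : 0 ≤ a) (hb : 0 ≤ b) (hc : 0 ≤ c) :
    heronForm a b c = 0 ↔ √a = √b + √c ∨ √b = √a + √c ∨ √c = √a + √b := by
  conv_lhs => rw [← sq_sqrt ha, ← sq_sqrt hb, ← sq_sqrt hc]
  exact heronForm_sq_eq_zero_iff (sqrt_nonneg a) (sqrt_nonneg b) (sqrt_nonneg c)

lemma heronForm_eq_sq_sub (a b c : ℝ) : heronForm a b c = (a - b - c)^2 - 4*b*c := by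
  unfold heronForm; ring

lemma mul_nonneg_of_heronForm_eq_zero {a b c : ℝ} (h : heronForm a b c = 0) : 0 ≤ b * c := by
  rw [heronForm_eq_sq_sub] at h
  nlinarith [sq_nonneg (a - b - c)]

lemma sameSign_of_heronForm_eq_zero {a b c : ℝ} (ha : a ≠ 0) (hb : b ≠ 0) (hc : c ≠ 0)
    (h : heronForm a b c = 0) : (0 < a ∧ 0 < b ∧ 0 < c) ∨ (a < 0 ∧ b < 0 ∧ c < 0) := by
  have hab : 0 < a * b := (mul_nonneg_of_heronForm_eq_zero (a := c) <| by
    rw [← h]; unfold heronForm; ring).lt_of_ne' (mul_ne_zero ha hb)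
  have hac : 0 < a * c := (mul_nonneg_of_heronForm_eq_zero (a := b) <| by
    rw [← h]; unfold heronForm; ring).lt_of_ne' (mul_ne_zero ha hc)
  rcases ha.lt_or_gt with ha' | ha'
  · exact Or.inr ⟨ha', neg_of_mul_pos_right hab ha'.le, neg_of_mul_pos_right hac ha'.le⟩
  · exact Or.inl ⟨ha', pos_of_mul_pos_right hab ha'.le, pos_of_mul_pos_right hac ha'.le⟩

lemma heronForm_abs_of_sameSign {a b c : ℝ}
    (hs : (0 < a ∧ 0 < b ∧ 0 < c) ∨ (a < 0 ∧ b < 0 ∧ c < 0)) :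
    heronForm |a| |b| |c| = heronForm a b c := by
  rcases hs with ⟨ha, hb, hc⟩ | ⟨ha, hb, hc⟩
  · rw [abs_of_pos ha, abs_of_pos hb, abs_of_pos hc]
  · rw [abs_of_neg ha, abs_of_neg hb, abs_of_neg hc]
    unfold heronForm; ring

theorem stmt1 (A B C α β γ : ℝ) (hA : A ≠ 0) (hB : B ≠ 0) (hC : C ≠ 0)
    (hα : α ≠ 0) (hβ : β ≠ 0) (hγ : γ ≠ 0) :
    A^2*α^2 + B^2*β^2 + C^2*γ^2 - 2*A*B*α*β - 2*A*C*α*γ - 2*B*C*β*γ = 0 ↔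
    (((0 < A*α ∧ 0 < B*β ∧ 0 < C*γ) ∨ (A*α < 0 ∧ B*β < 0 ∧ C*γ < 0)) ∧
      (Real.sqrt |A*α| = Real.sqrt |B*β| + Real.sqrt |C*γ| ∨
       Real.sqrt |B*β| = Real.sqrt |A*α| + Real.sqrt |C*γ| ∨
       Real.sqrt |C*γ| = Real.sqrt |A*α| + Real.sqrt |B*β|)) := by
  have hδ : A^2*α^2 + B^2*β^2 + C^2*γ^2 - 2*A*B*α*β - 2*A*C*α*γ - 2*B*C*β*γ
      = heronForm (A*α) (B*β) (C*γ) := by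
    unfold heronForm; ring
  rw [hδ, ← heronForm_eq_zero_iff_sqrt (abs_nonneg _) (abs_nonneg _) (abs_nonneg _)]
  constructor
  · intro h
    have hs := sameSign_of_heronForm_eq_zero (mul_ne_zero hA hα) (mul_ne_zero hB hβ)
      (mul_ne_zero hC hγ) h
    exact ⟨hs, by rwa [heronForm_abs_of_sameSign hs]⟩
  · rintro ⟨hs, h⟩
    rwa [heronForm_abs_of_sameSign hs] at h
end

section
/- Let α, β, γ ∈ (0,1) satisfy α+β+γ > 1, −α+β+γ < 1, α−β+γ < 1 and α+β−γ < 1, and let E₁, E₂, E₃ be arbitrary real numbers. Then the system p² − α²(p+q+r)² = E₁, q² − β²(p+q+r)² = E₂, r² − γ²(p+q+r)² = E₃ has at least one real solution (p, q, r). -/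
/-!
Put `y = ∑ xᵢ`. Any `y ≥ 0` at which all radicands `Eᵢ + cᵢ²y²` are nonnegative and a choice
of signs `σᵢ = ±1` with `∑ σᵢ √(Eᵢ + cᵢ²y²) = y` give the solution `xᵢ = σᵢ √(Eᵢ + cᵢ²y²)`.
For large `y` the gap `∑ σᵢ √(Eᵢ + cᵢ²y²) - y` grows like `(∑ σᵢ cᵢ - 1) y`: it tends to `+∞`
for all signs `+`, and to `-∞` when exactly one sign is flipped. At the first point `Y` where all
radicands are nonnegative, either the all-`+` gap is `≤ 0` or some one-flip gap is `≥ 0`, and the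
intermediate value theorem produces a zero beyond `Y`.
-/

open Real Filter Set

lemma abs_sqrt_add_sq_mul_sq_sub_le (E c y : ℝ) (h : 0 ≤ c * y) :
    |√(E + c ^ 2 * y ^ 2) - c * y| ≤ √|E| := by
  have hE := sq_sqrt (abs_nonneg E)
  have hE₀ := sqrt_nonneg |E|
  rw [abs_sub_le_iff]
  constructor
  · have : √(E + c ^ 2 * y ^ 2) ≤ c * y + √|E| :=
      sqrt_le_iff.2 ⟨by positivity, by nlinarith [le_abs_self E]⟩
    linarith
  · rcases le_total (c * y) √|E| with hle | hle
    · linarith [sqrt_nonneg (E + c ^ 2 * y ^ 2)]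
    · have : c * y - √|E| ≤ √(E + c ^ 2 * y ^ 2) :=
        le_sqrt_of_sq_le (by nlinarith [neg_abs_le E, mul_le_mul_of_nonneg_right hle hE₀])
      linarith

lemma exists_ge_eq_of_tendsto_atTop {f : ℝ → ℝ} (hf : Continuous f) (ht : Tendsto f atTop atTop)
    {a v : ℝ} (ha : f a ≤ v) : ∃ y ≥ a, f y = v :=
  isPreconnected_Ici.intermediate_value_Ici self_mem_Ici (le_principal_iff.2 (Ici_mem_atTop a))
    hf.continuousOn ht ha

lemma exists_ge_eq_of_tendsto_atBot {f : ℝ → ℝ} (hf : Continuous f) (ht : Tendsto f atTop atBot)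
    {a v : ℝ} (ha : v ≤ f a) : ∃ y ≥ a, f y = v :=
  isPreconnected_Ici.intermediate_value_Iic self_mem_Ici (le_principal_iff.2 (Ici_mem_atTop a))
    hf.continuousOn ht ha

lemma add_sq_mul_sq_nonneg_of_sqrt_neg_div_le {E c y : ℝ} (hc : 0 < c) (h : √(-E) / c ≤ y) :
    0 ≤ E + c ^ 2 * y ^ 2 := by
  have hy : √(-E) ≤ c * y := by rwa [div_le_iff₀' hc] at h
  nlinarith [sq_sqrt' (x := -E), le_max_left (-E) 0, sqrt_nonneg (-E)]

lemma add_sq_mul_sq_sqrt_neg_div_eq_zero {E c : ℝ} (hc : 0 < c) (h : 0 < √(-E) / c) :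
    E + c ^ 2 * (√(-E) / c) ^ 2 = 0 := by
  have hE : 0 ≤ -E := (sqrt_pos.1 (pos_of_mul_pos_left h (inv_nonneg.2 hc.le))).le
  rw [div_pow, sq_sqrt hE]
  field_simp
  ring

section

variable {ι : Type*} [Fintype ι] (E c : ι → ℝ)

/-- The paper's `F_{±±±}`. -/
noncomputable def signedRootGap (σ : ι → ℝ) (y : ℝ) : ℝ :=
  ∑ i, σ i * √(E i + c i ^ 2 * y ^ 2) - y

variable {E c}

lemma continuous_signedRootGap (σ : ι → ℝ) : Continuous (signedRootGap E c σ) := by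
  unfold signedRootGap
  fun_prop

lemma abs_signedRootGap_sub_le {σ : ι → ℝ} (hσ : ∀ i, |σ i| = 1) (hc : ∀ i, 0 ≤ c i) {y : ℝ}
    (hy : 0 ≤ y) : |signedRootGap E c σ y - (∑ i, σ i * c i - 1) * y| ≤ ∑ i, √|E i| := by
  have : signedRootGap E c σ y - (∑ i, σ i * c i - 1) * y =
      ∑ i, σ i * (√(E i + c i ^ 2 * y ^ 2) - c i * y) := by
    have hlin : ∑ i, σ i * (c i * y) = (∑ i, σ i * c i) * y := by
      simp only [Finset.sum_mul, mul_assoc]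
    simp only [signedRootGap, mul_sub, Finset.sum_sub_distrib, hlin]
    ring
  rw [this]
  refine (Finset.abs_sum_le_sum_abs _ _).trans (Finset.sum_le_sum fun i _ => ?_)
  rw [abs_mul, hσ, one_mul]
  exact abs_sqrt_add_sq_mul_sq_sub_le _ _ _ (mul_nonneg (hc i) hy)

lemma tendsto_signedRootGap_atTop {σ : ι → ℝ} (hσ : ∀ i, |σ i| = 1) (hc : ∀ i, 0 ≤ c i)
    (h : 1 < ∑ i, σ i * c i) : Tendsto (signedRootGap E c σ) atTop atTop := by
  refine tendsto_atTop_mono' _ ?_ (tendsto_atTop_add_const_right _ (-∑ i, √|E i|)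
    (tendsto_id.const_mul_atTop (sub_pos.2 h)))
  filter_upwards [eventually_ge_atTop 0] with y hy
  rw [id]
  linarith [(abs_le.1 (abs_signedRootGap_sub_le (E := E) hσ hc hy)).1]

lemma tendsto_signedRootGap_atBot {σ : ι → ℝ} (hσ : ∀ i, |σ i| = 1) (hc : ∀ i, 0 ≤ c i)
    (h : ∑ i, σ i * c i < 1) : Tendsto (signedRootGap E c σ) atTop atBot := by
  refine tendsto_atBot_mono' _ ?_ (tendsto_atBot_add_const_right _ (∑ i, √|E i|)
    (tendsto_id.const_mul_atTop_of_neg (sub_neg.2 h)))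
  filter_upwards [eventually_ge_atTop 0] with y hy
  rw [id]
  linarith [(abs_le.1 (abs_signedRootGap_sub_le (E := E) hσ hc hy)).2]

lemma sum_update_one_neg_one_mul [DecidableEq ι] (a : ι → ℝ) (j : ι) :
    ∑ i, Function.update (1 : ι → ℝ) j (-1) i * a i = ∑ i, a i - 2 * a j := by
  rw [← Finset.add_sum_erase _ _ (Finset.mem_univ j),
    ← Finset.add_sum_erase _ a (Finset.mem_univ j), Function.update_self,
    Finset.sum_congr rfl fun i hi => by
      rw [Function.update_of_ne (Finset.ne_of_mem_erase hi), Pi.one_apply, one_mul]]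
  ring

lemma signedRootGap_update_one_neg_one [DecidableEq ι] (j : ι) (y : ℝ) :
    signedRootGap E c (Function.update 1 j (-1)) y =
      signedRootGap E c 1 y - 2 * √(E j + c j ^ 2 * y ^ 2) := by
  simp only [signedRootGap, sum_update_one_neg_one_mul, Pi.one_apply, one_mul]
  ring

lemma exists_threshold_radicands_nonneg [Nonempty ι] (hc : ∀ i, 0 < c i) :
    ∃ Y, (∀ y ≥ Y, ∀ i, 0 ≤ E i + c i ^ 2 * y ^ 2) ∧
      (Y = 0 ∨ ∃ i, E i + c i ^ 2 * Y ^ 2 = 0) := by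
  obtain ⟨i₀, hi₀⟩ := Finite.exists_max fun i => √(-E i) / c i
  have hY : 0 ≤ √(-E i₀) / c i₀ := div_nonneg (sqrt_nonneg _) (hc i₀).le
  refine ⟨_, fun y hy i => add_sq_mul_sq_nonneg_of_sqrt_neg_div_le (hc i) ((hi₀ i).trans hy), ?_⟩
  rcases hY.eq_or_lt with h | h
  · exact Or.inl h.symm
  · exact Or.inr ⟨i₀, add_sq_mul_sq_sqrt_neg_div_eq_zero (hc i₀) h⟩

lemma signedRootGap_one_nonpos_or_exists_update_nonneg [DecidableEq ι] [Nontrivial ι] {Y : ℝ}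
    (hY : Y = 0 ∨ ∃ i, E i + c i ^ 2 * Y ^ 2 = 0) :
    signedRootGap E c 1 Y ≤ 0 ∨ ∃ j, 0 ≤ signedRootGap E c (Function.update 1 j (-1)) Y := by
  rcases hY with rfl | ⟨i, hi⟩
  -- At `Y = 0` flip the smallest root, which is at most half of the sum of the roots; otherwise
  -- flipping the sign of the vanishing root leaves the gap unchanged.
  · right
    set a := fun i => √(E i + c i ^ 2 * 0 ^ 2)
    obtain ⟨j, hj⟩ := Finite.exists_min a
    obtain ⟨k, hk⟩ := exists_ne j
    have : a j + a k ≤ ∑ i, a i := by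
      rw [← Finset.sum_pair hk.symm]
      exact Finset.sum_le_sum_of_subset_of_nonneg (Finset.subset_univ _)
        fun i _ _ => sqrt_nonneg _
    refine ⟨j, ?_⟩
    rw [signedRootGap_update_one_neg_one]
    simp only [signedRootGap, Pi.one_apply, one_mul]
    linarith [hj k]
  · rcases le_or_gt (signedRootGap E c 1 Y) 0 with h | h
    · exact Or.inl h
    · exact Or.inr ⟨i, by rw [signedRootGap_update_one_neg_one, hi, sqrt_zero]; linarith⟩

lemma exists_sq_sub_sq_mul_sum_sq_eq_of_signedRootGap_eq_zero {σ : ι → ℝ} (hσ : ∀ i, |σ i| = 1)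
    {y : ℝ} (hR : ∀ i, 0 ≤ E i + c i ^ 2 * y ^ 2) (h : signedRootGap E c σ y = 0) :
    ∃ x : ι → ℝ, ∀ i, x i ^ 2 - c i ^ 2 * (∑ j, x j) ^ 2 = E i := by
  refine ⟨fun i => σ i * √(E i + c i ^ 2 * y ^ 2), fun i => ?_⟩
  rw [sub_eq_zero.1 h, mul_pow, ← sq_abs (σ i), hσ, sq_sqrt (hR i)]
  ring

theorem exists_sq_sub_sq_mul_sum_sq_eq [Nontrivial ι] (hc : ∀ i, 0 < c i)
    (hsum : 1 < ∑ i, c i) (hflip : ∀ j, ∑ i, c i - 2 * c j < 1) :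
    ∃ x : ι → ℝ, ∀ i, x i ^ 2 - c i ^ 2 * (∑ j, x j) ^ 2 = E i := by
  classical
  obtain ⟨Y, hR, hY⟩ := exists_threshold_radicands_nonneg (E := E) hc
  have hc₀ : ∀ i, 0 ≤ c i := fun i => (hc i).le
  obtain ⟨σ, hσ, y, hy, h⟩ : ∃ σ : ι → ℝ, (∀ i, |σ i| = 1) ∧
      ∃ y ≥ Y, signedRootGap E c σ y = 0 := by
    rcases signedRootGap_one_nonpos_or_exists_update_nonneg hY with h | ⟨j, h⟩
    · have hσ : ∀ i, |(1 : ι → ℝ) i| = 1 := fun _ => abs_one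
      refine ⟨1, hσ, exists_ge_eq_of_tendsto_atTop (continuous_signedRootGap _)
        (tendsto_signedRootGap_atTop hσ hc₀ ?_) h⟩
      simpa only [Pi.one_apply, one_mul] using hsum
    · have hσ : ∀ i, |Function.update (1 : ι → ℝ) j (-1) i| = 1 := by
        intro i
        rcases eq_or_ne i j with rfl | hi <;> simp [*]
      refine ⟨_, hσ, exists_ge_eq_of_tendsto_atBot (continuous_signedRootGap _)
        (tendsto_signedRootGap_atBot hσ hc₀ ?_) h⟩
      rw [sum_update_one_neg_one_mul]
      exact hflip j
  exact exists_sq_sub_sq_mul_sum_sq_eq_of_signedRootGap_eq_zero hσ (hR y hy) h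

end

theorem stmt8 (α β γ E₁ E₂ E₃ : ℝ)
    (hα : α ∈ Set.Ioo (0:ℝ) 1) (hβ : β ∈ Set.Ioo (0:ℝ) 1)
    (hγ : γ ∈ Set.Ioo (0:ℝ) 1)
    (h1 : 1 < α + β + γ) (h2 : -α + β + γ < 1)
    (h3 : α - β + γ < 1) (h4 : α + β - γ < 1) :
    ∃ p q r : ℝ, p^2 - α^2*(p+q+r)^2 = E₁ ∧
      q^2 - β^2*(p+q+r)^2 = E₂ ∧ r^2 - γ^2*(p+q+r)^2 = E₃ := by
  obtain ⟨x, hx⟩ := exists_sq_sub_sq_mul_sum_sq_eq (E := ![E₁, E₂, E₃]) (c := ![α, β, γ])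
    (by intro i; fin_cases i <;> simp [hα.1, hβ.1, hγ.1])
    (by simpa [Fin.sum_univ_three] using h1)
    (by intro j; fin_cases j <;> simp [Fin.sum_univ_three] <;> linarith)
  exact ⟨x 0, x 1, x 2, by simpa [Fin.sum_univ_three] using hx 0,
    by simpa [Fin.sum_univ_three] using hx 1, by simpa [Fin.sum_univ_three] using hx 2⟩
end

section
/- Let α, β, γ be real numbers with Π = (1+α+β+γ)(1−α+β+γ)(1+α−β+γ)(1+α+β−γ)(1−α−β+γ)(1−α+β−γ)(1+α−β−γ)(1−α−β−γ) ≠ 0, let δ be a complex square root of −1/(4Π), and let U, V, W be as follows: U = −3α⁴+2(1+β²+γ²)α²+β⁴+γ⁴−2(β²+γ²+β²γ²)+1, V = −3β⁴+2(1+α²+γ²)β²+α⁴+γ⁴−2(α²+γ²+α²γ²)+1, W = −3γ⁴+2(1+α²+β²)γ²+α⁴+β⁴−2(α²+β²+α²β²)+1. Then (p,q,r) = (Uδ, Vδ, Wδ) is a solution of the system p² − α²(p+q+r)² = (α²−1)/4, q² − β²(p+q+r)² = (β²−1)/4, r² − γ²(p+q+r)² = (γ²−1)/4. -/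
/-!
The polynomials `U`, `V`, `W` are cyclic permutations of one polynomial `trinoidU`, and the
product `Π` is invariant under permuting `α, β, γ`. So everything reduces to a single polynomial
identity `U² - α²(U + V + W)² = (1 - α²) Π`; scaling by `δ` with `δ² = -1/(4Π)` turns its right-hand
side into `(α² - 1)/4`.
-/

section Trinoid

variable {R : Type*} [CommRing R]

def trinoidU (a b c : R) : R :=
  -3 * a ^ 4 + 2 * (1 + b ^ 2 + c ^ 2) * a ^ 2 + b ^ 4 + c ^ 4 - 2 * (b ^ 2 + c ^ 2 + b ^ 2 * c ^ 2) + 1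

def trinoidPi (a b c : R) : R :=
  (1 + a + b + c) * (1 - a + b + c) * (1 + a - b + c) * (1 + a + b - c) *
    (1 - a - b + c) * (1 - a + b - c) * (1 + a - b - c) * (1 - a - b - c)

theorem trinoidPi_rotate (a b c : R) : trinoidPi b c a = trinoidPi a b c := by
  unfold trinoidPi; ring

theorem trinoidU_sq_sub_sq_mul_sum (a b c : R) :
    trinoidU a b c ^ 2 - a ^ 2 * (trinoidU a b c + trinoidU b c a + trinoidU c a b) ^ 2 =
      (1 - a ^ 2) * trinoidPi a b c := by
  unfold trinoidU trinoidPi; ring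

end Trinoid

theorem sq_mul_sub_sq_mul_sq_mul_eq_of_sq_eq {K : Type*} [Field K] {X S t P δ : K}
    (hP : P ≠ 0) (hδ : δ ^ 2 = -1 / (4 * P)) (h : X ^ 2 - t ^ 2 * S ^ 2 = (1 - t ^ 2) * P) :
    (X * δ) ^ 2 - t ^ 2 * (S * δ) ^ 2 = (t ^ 2 - 1) / 4 := by
  calc (X * δ) ^ 2 - t ^ 2 * (S * δ) ^ 2 = (X ^ 2 - t ^ 2 * S ^ 2) * δ ^ 2 := by ring
    _ = (t ^ 2 - 1) / 4 := by rw [h, hδ]; field_simp; ring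

theorem stmt12 (α β γ Pi : ℝ)
    (hPi : Pi = (1+α+β+γ)*(1-α+β+γ)*(1+α-β+γ)*(1+α+β-γ)*
      (1-α-β+γ)*(1-α+β-γ)*(1+α-β-γ)*(1-α-β-γ))
    (hPine : Pi ≠ 0)
    (δ : ℂ) (hδ : δ^2 = -1/(4*(Pi:ℂ)))
    (U V W : ℝ)
    (hU : U = -3*α^4 + 2*(1+β^2+γ^2)*α^2 + β^4 + γ^4 - 2*(β^2+γ^2+β^2*γ^2) + 1)
    (hV : V = -3*β^4 + 2*(1+α^2+γ^2)*β^2 + α^4 + γ^4 - 2*(α^2+γ^2+α^2*γ^2) + 1)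
    (hW : W = -3*γ^4 + 2*(1+α^2+β^2)*γ^2 + α^4 + β^4 - 2*(α^2+β^2+α^2*β^2) + 1) :
    ((U:ℂ)*δ)^2 - (α:ℂ)^2*((U:ℂ)*δ + (V:ℂ)*δ + (W:ℂ)*δ)^2 = ((α:ℂ)^2 - 1)/4 ∧
    ((V:ℂ)*δ)^2 - (β:ℂ)^2*((U:ℂ)*δ + (V:ℂ)*δ + (W:ℂ)*δ)^2 = ((β:ℂ)^2 - 1)/4 ∧
    ((W:ℂ)*δ)^2 - (γ:ℂ)^2*((U:ℂ)*δ + (V:ℂ)*δ + (W:ℂ)*δ)^2 = ((γ:ℂ)^2 - 1)/4 := by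
  set a : ℂ := (α : ℂ)
  set b : ℂ := (β : ℂ)
  set c : ℂ := (γ : ℂ)
  have hUa : (U : ℂ) = trinoidU a b c := by rw [hU, trinoidU]; push_cast; ring
  have hVb : (V : ℂ) = trinoidU b c a := by rw [hV, trinoidU]; push_cast; ring
  have hWc : (W : ℂ) = trinoidU c a b := by rw [hW, trinoidU]; push_cast; ring
  have hPiC : (Pi : ℂ) = trinoidPi a b c := by rw [hPi, trinoidPi]; push_cast; ring
  have hP : trinoidPi a b c ≠ 0 := hPiC ▸ Complex.ofReal_ne_zero.mpr hPine
  rw [hPiC] at hδ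
  rw [hUa, hVb, hWc, ← add_mul, ← add_mul]
  refine ⟨?_, ?_, ?_⟩ <;> refine sq_mul_sub_sq_mul_sq_mul_eq_of_sq_eq hP hδ ?_
  · exact trinoidU_sq_sub_sq_mul_sum a b c
  · rw [← trinoidPi_rotate a b c, ← trinoidU_sq_sub_sq_mul_sum b c a]; ring
  · rw [trinoidPi_rotate c a b, ← trinoidU_sq_sub_sq_mul_sum c a b]; ring
end

section
/- Let g be a meromorphic function and ω a holomorphic 1-form forming Weierstrass data (poles of g of order k are zeros of ω of order 2k), and let Q = ω·dg be the Hopf differential. Then for a point z and k ≥ 1, z is a zero of Q of order k if and only if one of the following holds: z is a zero of g of order k+1, or z is a pole of g of order k+1, or z is a zero of dg/g of order k (with g(z) ≠ 0, ∞). -/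
/-!
`OrdAt f z n` says exactly that `f` is meromorphic at `z` with `meromorphicOrderAt f z = n`, so
the theorem reduces to additivity of the meromorphic order. If `g` has order `n ≠ 0`, then `dg`
has order `n - 1` and `ω` has order `2 max(-n, 0)`, so `Q = ω dg` has order `|n| - 1`. If `n = 0`,
then `ω` and `g` are units at `z`, so `Q` and `dg/g` both have the order of `dg`.
-/

open Filter Topology

/-- `f` has order exactly `n` at `z₀`: near `z₀` (off `z₀`), `f z = (z-z₀)^n · g z`
with `g` analytic and nonvanishing at `z₀`. -/
def OrdAt (f : ℂ → ℂ) (z₀ : ℂ) (n : ℤ) : Prop :=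
  ∃ g : ℂ → ℂ, AnalyticAt ℂ g z₀ ∧ g z₀ ≠ 0 ∧
    ∀ᶠ z in nhdsWithin z₀ {z₀}ᶜ, f z = (z - z₀)^n * g z

theorem ordAt_iff_meromorphicOrderAt {f : ℂ → ℂ} {z : ℂ} {n : ℤ} :
    OrdAt f z n ↔ MeromorphicAt f z ∧ meromorphicOrderAt f z = n := by
  constructor
  · rintro ⟨g, hg, hg0, hfg : f =ᶠ[𝓝[≠] z] fun ζ => (ζ - z) ^ n * g ζ⟩
    have hf : MeromorphicAt f z := by
      refine MeromorphicAt.congr ?_ hfg.symm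
      fun_prop
    exact ⟨hf, (meromorphicOrderAt_eq_int_iff hf).2 ⟨g, hg, hg0, hfg⟩⟩
  · rintro ⟨hf, hfn⟩
    exact (meromorphicOrderAt_eq_int_iff hf).1 hfn

theorem meromorphicOrderAt_mul_deriv_eq_div_of_eq_zero {𝕜 : Type*} [NontriviallyNormedField 𝕜]
    [CompleteSpace 𝕜] {w g : 𝕜 → 𝕜} {z : 𝕜} (hw : MeromorphicAt w z) (hg : MeromorphicAt g z)
    (hw0 : meromorphicOrderAt w z = 0) (hg0 : meromorphicOrderAt g z = 0) :
    meromorphicOrderAt (fun ζ => w ζ * deriv g ζ) z =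
      meromorphicOrderAt (fun ζ => deriv g ζ / g ζ) z := by
  rw [fun_meromorphicOrderAt_mul hw hg.deriv, fun_meromorphicOrderAt_div hg.deriv hg, hw0, hg0,
    zero_add, sub_zero]

theorem stmt17_general (g w : ℂ → ℂ) (z : ℂ)
    (hgmero : ∃ n : ℤ, OrdAt g z n)
    (hweier : ∀ n : ℤ, OrdAt g z n → OrdAt w z (2 * max (-n) 0))
    (k : ℕ) :
    OrdAt (fun ζ => w ζ * deriv g ζ) z (k : ℤ) ↔
      (OrdAt g z ((k : ℤ) + 1) ∨ OrdAt g z (-((k : ℤ) + 1)) ∨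
        (OrdAt g z 0 ∧ OrdAt (fun ζ => deriv g ζ / g ζ) z (k : ℤ))) := by
  obtain ⟨n, hgOrd⟩ := hgmero
  obtain ⟨hw, hwn⟩ := ordAt_iff_meromorphicOrderAt.1 (hweier n hgOrd)
  obtain ⟨hg, hgn⟩ := ordAt_iff_meromorphicOrderAt.1 hgOrd
  simp only [ordAt_iff_meromorphicOrderAt, hg, hw.fun_mul hg.deriv, hg.deriv.fun_div hg, true_and,
    hgn, WithTop.coe_inj]
  by_cases hn : n = 0
  · subst hn
    rw [meromorphicOrderAt_mul_deriv_eq_div_of_eq_zero hw hg (by simpa using hwn) hgn]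
    have hk : (0 : ℤ) ≠ k + 1 ∧ (0 : ℤ) ≠ -(k + 1) := by omega
    simp only [hk.1, hk.2, true_and, false_or]
  · rw [fun_meromorphicOrderAt_mul hw hg.deriv, hwn,
      meromorphicOrderAt_deriv_eq_sub_one (by exact_mod_cast hn) hgn, ← WithTop.coe_add,
      WithTop.coe_inj]
    omega

theorem stmt17 (g w : ℂ → ℂ) (z : ℂ)
    (hgmero : ∃ n : ℤ, OrdAt g z n)
    (hweier : ∀ n : ℤ, OrdAt g z n → OrdAt w z (2 * max (-n) 0))
    (k : ℕ) (hk : 1 ≤ k) :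
    OrdAt (fun ζ => w ζ * deriv g ζ) z (k : ℤ) ↔
      (OrdAt g z ((k : ℤ) + 1) ∨ OrdAt g z (-((k : ℤ) + 1)) ∨
        (OrdAt g z 0 ∧ OrdAt (fun ζ => deriv g ζ / g ζ) z (k : ℤ))) :=
  stmt17_general g w z hgmero hweier k
end

section
/- Let α, γ be real non-integers, β real, s₋₋₋ = (1−α−β−γ)/2, s₋₊₋ = (1−α+β−γ)/2, and let σ be a solution of the hypergeometric equation w'' + ((1−α)/z + (1−γ)/(z−1))w' + s₋₋₋s₋₊₋ w/(z(z−1)) = 0. For real numbers a, b, c define K(z) = z^{(1−α)/2}(1−z)^{(1−γ)/2}((a+bz)σ(z) + cz(1−z)σ'(z)). If σ₁, σ₂ are two solutions with Wronskian σ₁σ₂' − σ₁'σ₂ = α z^{α−1}(1−z)^{γ−1}, and K₁, K₂ are the corresponding functions, then K₁K₂' − K₁'K₂ = α·F(z), where F(z) = a(a+cα)(1−z) + (a+b)(a+b−cγ)z − (b+s₋₋₋c)(b+s₋₊₋c)z(1−z). -/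
/-!
Both `K₁` and `K₂` are the common factor `z^{(1-α)/2} (1-z)^{(1-γ)/2}` times `Gᵢ = A σᵢ + B σᵢ'`
with `A = a + b z`, `B = c z (1 - z)`. A common factor `h` multiplies a Wronskian by `h²`, and
once `σᵢ''` is eliminated through the differential equation, `Gᵢ` and `Gᵢ'` are combinations of
`σᵢ, σᵢ'` with the same coefficients for `i = 1, 2`, so `W(G₁, G₂)` is the determinant of those
coefficients times `W(σ₁, σ₂)`. The powers of `z` and `1 - z` then cancel against the given
Wronskian, and the determinant is the quadratic polynomial `F`.
-/

open Complex

noncomputable def wronskian {𝕜 : Type*} [NontriviallyNormedField 𝕜] (f g : 𝕜 → 𝕜) (z : 𝕜) : 𝕜 :=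
  f z * deriv g z - deriv f z * g z

section Wronskian

variable {𝕜 : Type*} [NontriviallyNormedField 𝕜]

theorem wronskian_mul_left {h f g : 𝕜 → 𝕜} {z : 𝕜} (hh : DifferentiableAt 𝕜 h z)
    (hf : DifferentiableAt 𝕜 f z) (hg : DifferentiableAt 𝕜 g z) :
    wronskian (fun w => h w * f w) (fun w => h w * g w) z = h z ^ 2 * wronskian f g z := by
  have hhf : HasDerivAt (fun w => h w * f w) _ z := hh.hasDerivAt.mul hf.hasDerivAt
  have hhg : HasDerivAt (fun w => h w * g w) _ z := hh.hasDerivAt.mul hg.hasDerivAt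
  rw [wronskian, wronskian, hhf.deriv, hhg.deriv]
  ring

theorem wronskian_add_mul_deriv_of_ode {A B σ₁ σ₂ : 𝕜 → 𝕜} {z A' B' P Q : 𝕜}
    (hA : HasDerivAt A A' z) (hB : HasDerivAt B B' z)
    (hσ₁ : DifferentiableAt 𝕜 σ₁ z) (hσ₁' : DifferentiableAt 𝕜 (deriv σ₁) z)
    (hσ₂ : DifferentiableAt 𝕜 σ₂ z) (hσ₂' : DifferentiableAt 𝕜 (deriv σ₂) z)
    (hode₁ : deriv (deriv σ₁) z + P * deriv σ₁ z + Q * σ₁ z = 0)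
    (hode₂ : deriv (deriv σ₂) z + P * deriv σ₂ z + Q * σ₂ z = 0) :
    wronskian (fun w => A w * σ₁ w + B w * deriv σ₁ w) (fun w => A w * σ₂ w + B w * deriv σ₂ w) z
      = (A z * (A z + B' - B z * P) - B z * (A' - B z * Q)) * wronskian σ₁ σ₂ z := by
  have hG₁ : HasDerivAt (fun w => A w * σ₁ w + B w * deriv σ₁ w) _ z :=
    (hA.mul hσ₁.hasDerivAt).add (hB.mul hσ₁'.hasDerivAt)
  have hG₂ : HasDerivAt (fun w => A w * σ₂ w + B w * deriv σ₂ w) _ z :=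
    (hA.mul hσ₂.hasDerivAt).add (hB.mul hσ₂'.hasDerivAt)
  rw [wronskian, wronskian, hG₁.deriv, hG₂.deriv]
  linear_combination (B z * (A z * σ₁ z + B z * deriv σ₁ z)) * hode₂
    - (B z * (A z * σ₂ z + B z * deriv σ₂ z)) * hode₁

theorem wronskian_mul_add_mul_deriv_of_ode {h A B σ₁ σ₂ : 𝕜 → 𝕜} {z A' B' P Q : 𝕜}
    (hh : DifferentiableAt 𝕜 h z) (hA : HasDerivAt A A' z) (hB : HasDerivAt B B' z)
    (hσ₁ : DifferentiableAt 𝕜 σ₁ z) (hσ₁' : DifferentiableAt 𝕜 (deriv σ₁) z)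
    (hσ₂ : DifferentiableAt 𝕜 σ₂ z) (hσ₂' : DifferentiableAt 𝕜 (deriv σ₂) z)
    (hode₁ : deriv (deriv σ₁) z + P * deriv σ₁ z + Q * σ₁ z = 0)
    (hode₂ : deriv (deriv σ₂) z + P * deriv σ₂ z + Q * σ₂ z = 0) :
    wronskian (fun w => h w * (A w * σ₁ w + B w * deriv σ₁ w))
        (fun w => h w * (A w * σ₂ w + B w * deriv σ₂ w)) z
      = h z ^ 2 * (A z * (A z + B' - B z * P) - B z * (A' - B z * Q)) * wronskian σ₁ σ₂ z := by
  have hG₁ : DifferentiableAt 𝕜 (fun w => A w * σ₁ w + B w * deriv σ₁ w) z :=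
    ((hA.mul hσ₁.hasDerivAt).add (hB.mul hσ₁'.hasDerivAt)).differentiableAt
  have hG₂ : DifferentiableAt 𝕜 (fun w => A w * σ₂ w + B w * deriv σ₂ w) z :=
    ((hA.mul hσ₂.hasDerivAt).add (hB.mul hσ₂'.hasDerivAt)).differentiableAt
  rw [wronskian_mul_left hh hG₁ hG₂,
    wronskian_add_mul_deriv_of_ode hA hB hσ₁ hσ₁' hσ₂ hσ₂' hode₁ hode₂, mul_assoc]

theorem hasDerivAt_const_mul_mul_one_sub (c z : 𝕜) :
    HasDerivAt (fun w => c * w * (1 - w)) (c * (1 - 2 * z)) z :=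
  (((hasDerivAt_id' z).const_mul c).mul ((hasDerivAt_id' z).const_sub 1)).congr_deriv (by ring)

end Wronskian

theorem Complex.cpow_mul_cpow_mul_cpow_eq_one {x u v w : ℂ} (hx : x ≠ 0) (h : u + v + w = 0) :
    x ^ u * x ^ v * x ^ w = 1 := by
  rw [← cpow_add _ _ hx, ← cpow_add _ _ hx, h, cpow_zero]

theorem Complex.sq_cpow_mul_cpow_mul_cpow_mul_cpow {x y u v u' v' : ℂ} (hx : x ≠ 0) (hy : y ≠ 0)
    (hu : u + u + u' = 0) (hv : v + v + v' = 0) (t : ℂ) :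
    (x ^ u * y ^ v) ^ 2 * (t * x ^ u' * y ^ v') = t := by
  calc _ = t * (x ^ u * x ^ u * x ^ u') * (y ^ v * y ^ v * y ^ v') := by ring
    _ = t := by
      rw [cpow_mul_cpow_mul_cpow_eq_one hx hu, cpow_mul_cpow_mul_cpow_eq_one hy hv, mul_one, mul_one]

theorem Complex.differentiableAt_cpow_mul_one_sub_cpow {z : ℂ} (hz : z ∈ slitPlane)
    (hz' : 1 - z ∈ slitPlane) (p q : ℂ) :
    DifferentiableAt ℂ (fun w => w ^ p * (1 - w) ^ q) z :=
  (differentiableAt_id.cpow_const hz).mul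
    (((differentiableAt_const 1).sub differentiableAt_id).cpow_const hz')

theorem riemann_determinant_eq (α β γ a b c : ℝ) {z : ℂ} (hz₀ : z ≠ 0) (hz₁ : z - 1 ≠ 0) :
    ((a:ℂ) + b * z) * ((a + b * z) + c * (1 - 2 * z)
        - c * z * (1 - z) * ((1 - (α:ℂ)) / z + (1 - (γ:ℂ)) / (z - 1)))
      - c * z * (1 - z) * (b - c * z * (1 - z)
        * ((((1-α-β-γ)/2 : ℝ) : ℂ) * (((1-α+β-γ)/2 : ℝ) : ℂ) / (z * (z - 1))))
    = (((a*(a+c*α) : ℝ)):ℂ) * (1 - z)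
          + (((a+b)*(a+b-c*γ) : ℝ):ℂ) * z
          - ((((b+((1-α-β-γ)/2)*c) * (b+((1-α+β-γ)/2)*c)) : ℝ):ℂ) * z * (1 - z) := by
  push_cast
  field_simp
  ring

theorem stmt18_general (α β γ a b c : ℝ)
    (S : Set ℂ) (hS : S = {z : ℂ | 0 < z.im})
    (σ₁ σ₂ : ℂ → ℂ)
    (hd₁ : ∀ z ∈ S, DifferentiableAt ℂ σ₁ z ∧ DifferentiableAt ℂ (deriv σ₁) z)
    (hd₂ : ∀ z ∈ S, DifferentiableAt ℂ σ₂ z ∧ DifferentiableAt ℂ (deriv σ₂) z)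
    (hode₁ : ∀ z ∈ S, deriv (deriv σ₁) z
      + ((1 - (α:ℂ))/z + (1 - (γ:ℂ))/(z - 1)) * deriv σ₁ z
      + ((((1-α-β-γ)/2 : ℝ) : ℂ) * (((1-α+β-γ)/2 : ℝ) : ℂ)) * σ₁ z / (z*(z-1)) = 0)
    (hode₂ : ∀ z ∈ S, deriv (deriv σ₂) z
      + ((1 - (α:ℂ))/z + (1 - (γ:ℂ))/(z - 1)) * deriv σ₂ z
      + ((((1-α-β-γ)/2 : ℝ) : ℂ) * (((1-α+β-γ)/2 : ℝ) : ℂ)) * σ₂ z / (z*(z-1)) = 0)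
    (hwr : ∀ z ∈ S, σ₁ z * deriv σ₂ z - deriv σ₁ z * σ₂ z
      = (α:ℂ) * z ^ ((α:ℂ) - 1) * (1 - z) ^ ((γ:ℂ) - 1))
    (K₁ K₂ : ℂ → ℂ)
    (hK₁ : ∀ z, K₁ z = z ^ (((1-α)/2 : ℝ) : ℂ) * (1 - z) ^ (((1-γ)/2 : ℝ) : ℂ) *
      (((a:ℂ) + (b:ℂ)*z) * σ₁ z + (c:ℂ)*z*(1-z) * deriv σ₁ z))
    (hK₂ : ∀ z, K₂ z = z ^ (((1-α)/2 : ℝ) : ℂ) * (1 - z) ^ (((1-γ)/2 : ℝ) : ℂ) *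
      (((a:ℂ) + (b:ℂ)*z) * σ₂ z + (c:ℂ)*z*(1-z) * deriv σ₂ z)) :
    ∀ z ∈ S, K₁ z * deriv K₂ z - deriv K₁ z * K₂ z
      = (α:ℂ) * ((((a*(a+c*α) : ℝ)):ℂ) * (1 - z)
          + (((a+b)*(a+b-c*γ) : ℝ):ℂ) * z
          - ((((b+((1-α-β-γ)/2)*c) * (b+((1-α+β-γ)/2)*c)) : ℝ):ℂ) * z * (1 - z)) := by
  intro z hzS
  have hz : 0 < z.im := by rwa [hS] at hzS
  have hz₀ : z ≠ 0 := by rintro rfl; simp at hz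
  have hz₁ : z - 1 ≠ 0 := fun h => by simp [sub_eq_zero.mp h] at hz
  have h1z : 1 - z ≠ 0 := fun h => hz₁ (by linear_combination -h)
  have hfactor := differentiableAt_cpow_mul_one_sub_cpow (Or.inr hz.ne')
    (Or.inr (by simpa using hz.ne')) (((1-α)/2 : ℝ) : ℂ) (((1-γ)/2 : ℝ) : ℂ)
  have hA : HasDerivAt (fun w : ℂ => (a:ℂ) + b * w) b z :=
    (((hasDerivAt_id' z).const_mul (b:ℂ)).const_add (a:ℂ)).congr_deriv (mul_one _)
  obtain ⟨hσ₁, hσ₁'⟩ := hd₁ z hzS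
  obtain ⟨hσ₂, hσ₂'⟩ := hd₂ z hzS
  show wronskian K₁ K₂ z = _
  rw [funext hK₁, funext hK₂, wronskian_mul_add_mul_deriv_of_ode hfactor hA
      (hasDerivAt_const_mul_mul_one_sub (c:ℂ) z) hσ₁ hσ₁' hσ₂ hσ₂'
      (P := (1 - (α:ℂ)) / z + (1 - (γ:ℂ)) / (z - 1))
      (Q := (((1-α-β-γ)/2 : ℝ) : ℂ) * (((1-α+β-γ)/2 : ℝ) : ℂ) / (z * (z - 1)))
      (by linear_combination hode₁ z hzS) (by linear_combination hode₂ z hzS),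
    wronskian, hwr z hzS, mul_right_comm,
    sq_cpow_mul_cpow_mul_cpow_mul_cpow hz₀ h1z (by push_cast; ring) (by push_cast; ring),
    riemann_determinant_eq α β γ a b c hz₀ hz₁]

theorem stmt18 (α β γ a b c : ℝ)
    (hα : ∀ n : ℤ, α ≠ n) (hγ : ∀ n : ℤ, γ ≠ n)
    (S : Set ℂ) (hS : S = {z : ℂ | 0 < z.im})
    (σ₁ σ₂ : ℂ → ℂ)
    (hd₁ : ∀ z ∈ S, DifferentiableAt ℂ σ₁ z ∧ DifferentiableAt ℂ (deriv σ₁) z)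
    (hd₂ : ∀ z ∈ S, DifferentiableAt ℂ σ₂ z ∧ DifferentiableAt ℂ (deriv σ₂) z)
    (hode₁ : ∀ z ∈ S, deriv (deriv σ₁) z
      + ((1 - (α:ℂ))/z + (1 - (γ:ℂ))/(z - 1)) * deriv σ₁ z
      + ((((1-α-β-γ)/2 : ℝ) : ℂ) * (((1-α+β-γ)/2 : ℝ) : ℂ)) * σ₁ z / (z*(z-1)) = 0)
    (hode₂ : ∀ z ∈ S, deriv (deriv σ₂) z
      + ((1 - (α:ℂ))/z + (1 - (γ:ℂ))/(z - 1)) * deriv σ₂ z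
      + ((((1-α-β-γ)/2 : ℝ) : ℂ) * (((1-α+β-γ)/2 : ℝ) : ℂ)) * σ₂ z / (z*(z-1)) = 0)
    (hwr : ∀ z ∈ S, σ₁ z * deriv σ₂ z - deriv σ₁ z * σ₂ z
      = (α:ℂ) * z ^ ((α:ℂ) - 1) * (1 - z) ^ ((γ:ℂ) - 1))
    (K₁ K₂ : ℂ → ℂ)
    (hK₁ : ∀ z, K₁ z = z ^ (((1-α)/2 : ℝ) : ℂ) * (1 - z) ^ (((1-γ)/2 : ℝ) : ℂ) *
      (((a:ℂ) + (b:ℂ)*z) * σ₁ z + (c:ℂ)*z*(1-z) * deriv σ₁ z))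
    (hK₂ : ∀ z, K₂ z = z ^ (((1-α)/2 : ℝ) : ℂ) * (1 - z) ^ (((1-γ)/2 : ℝ) : ℂ) *
      (((a:ℂ) + (b:ℂ)*z) * σ₂ z + (c:ℂ)*z*(1-z) * deriv σ₂ z)) :
    ∀ z ∈ S, K₁ z * deriv K₂ z - deriv K₁ z * K₂ z
      = (α:ℂ) * ((((a*(a+c*α) : ℝ)):ℂ) * (1 - z)
          + (((a+b)*(a+b-c*γ) : ℝ):ℂ) * z
          - ((((b+((1-α-β-γ)/2)*c) * (b+((1-α+β-γ)/2)*c)) : ℝ):ℂ) * z * (1 - z)) :=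
  stmt18_general α β γ a b c S hS σ₁ σ₂ hd₁ hd₂ hode₁ hode₂ hwr K₁ K₂ hK₁ hK₂
end
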